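/- Let d be the quasi-distance d((s,x),(t,y)) := ρ(t−s, θ_{t,s}(x) − y) as above, and define the ball B((s,x),δ) := {(t,y) ∈ S : d((s,x),(t,y)) ≤ δ}. Then there exists C₁ = C₁(n,d) ≥ 1, independent of (s,x) and δ > 0, such that C₁^{-1} δ^{2+n²d} ≤ Leb(B((s,x),δ)) ≤ C₁ δ^{2+n²d}, where Leb denotes Lebesgue measure on ℝ^{1+nd}. In particular the measure space (S, d, Leb) satisfies the doubling property for small radii. -/

import Mathlib

open scoped BigOperators
open MeasureTheory

/-- Euclidean norm of the i-th d-dimensional block of z ∈ ℝ^{nd}. -/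
noncomputable def blockNorm (n d : ℕ) (z : EuclideanSpace ℝ (Fin n × Fin d)) (i : Fin n) : ℝ :=
  Real.sqrt (∑ q : Fin d, (z (i, q)) ^ 2)

/-- The parabolic quasi-norm ρ(u,z) = |u|^{1/2} + Σ_{i=1}^n |z_i|^{1/(2i-1)}. -/
noncomputable def rho (n d : ℕ) (u : ℝ) (z : EuclideanSpace ℝ (Fin n × Fin d)) : ℝ :=
  |u| ^ ((1:ℝ)/2) + ∑ i : Fin n, blockNorm n d z i ^ ((1:ℝ) / (2 * (i:ℕ) + 1))

/-!
For fixed `t` the map `y ↦ θ t s x - y` preserves Lebesgue measure, so by Fubini the shear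
`(t, y) ↦ (t - s, θ t s x - y)` carries the ball onto the centred ball
`{(u, z) : ρ(u, z) ≤ δ}` without changing its volume; the constraint `t ∈ [-T, T]` is
automatic because `ρ(u, z) ≤ δ` forces `|u| ≤ δ²`. The centred ball of radius `δ` is the
image of the unit ball under the anisotropic dilation `(u, z) ↦ (δ² u, (δ^{2i+1} z_i)_i)`,
whose determinant is `δ^{2 + n²d}`. Hence the volume is exactly `δ^{2 + n²d}` times the
volume of the unit ball, which is positive (it contains a neighbourhood of `0`) and finite
(it is compact).
-/

lemma Fin.sum_univ_two_mul_add_one (n : ℕ) : ∑ i : Fin n, (2 * (i : ℕ) + 1) = n ^ 2 := by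
  rw [Fin.sum_univ_eq_sum_range (fun i => 2 * i + 1)]
  induction n with
  | zero => simp
  | succ m ih => rw [Finset.sum_range_succ, ih]; ring

lemma measurePreserving_sub_prodMk_sub {G : Type*} [AddCommGroup G] [MeasurableSpace G]
    [MeasurableAdd G] [MeasurableNeg G] [MeasurableSub₂ G] (μ : Measure G) [SFinite μ]
    [μ.IsAddLeftInvariant] [μ.IsNegInvariant] {γ : ℝ → G} (hγ : Measurable γ) (s : ℝ) :
    MeasurePreserving (fun p : ℝ × G => (p.1 - s, γ p.1 - p.2))
      (volume.prod μ) (volume.prod μ) :=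
  (measurePreserving_sub_right volume s).skew_product ((hγ.comp measurable_fst).sub measurable_snd)
    (ae_of_all _ fun t => (Measure.measurePreserving_sub_left μ (γ t)).map_eq)

section ParabolicBall

variable {n d : ℕ}

lemma blockNorm_nonneg (z : EuclideanSpace ℝ (Fin n × Fin d)) (i : Fin n) :
    0 ≤ blockNorm n d z i :=
  Real.sqrt_nonneg _

lemma norm_sq_eq_sum_blockNorm_sq (z : EuclideanSpace ℝ (Fin n × Fin d)) :
    ‖z‖ ^ 2 = ∑ i, blockNorm n d z i ^ 2 := by
  simp only [EuclideanSpace.norm_sq_eq, Fintype.sum_prod_type, Real.norm_eq_abs, sq_abs,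
    blockNorm]
  exact Finset.sum_congr rfl fun i _ =>
    (Real.sq_sqrt (Finset.sum_nonneg fun q _ => sq_nonneg _)).symm

lemma continuous_rho :
    Continuous fun p : ℝ × EuclideanSpace ℝ (Fin n × Fin d) => rho n d p.1 p.2 := by
  unfold rho blockNorm
  refine ((continuous_abs.comp continuous_fst).rpow_const fun _ => Or.inr (by norm_num)).add
    (continuous_finsetSum _ fun i _ => ?_)
  refine (Real.continuous_sqrt.comp (continuous_finsetSum _ fun q _ => ?_)).rpow_const
    fun _ => Or.inr (by positivity)
  exact ((EuclideanSpace.proj (i, q)).continuous.comp continuous_snd).pow 2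

lemma rho_zero : rho n d 0 0 = 0 := by
  have hb : ∀ i, blockNorm n d 0 i = 0 := fun i => by simp [blockNorm]
  simp only [rho, abs_zero, hb]
  rw [Real.zero_rpow (by norm_num), zero_add]
  exact Finset.sum_eq_zero fun i _ => Real.zero_rpow (by positivity)

lemma abs_rpow_one_div_two_le_rho (u : ℝ) (z : EuclideanSpace ℝ (Fin n × Fin d)) :
    |u| ^ ((1:ℝ)/2) ≤ rho n d u z :=
  le_add_of_nonneg_right
    (Finset.sum_nonneg fun i _ => Real.rpow_nonneg (blockNorm_nonneg z i) _)

lemma blockNorm_rpow_le_rho (u : ℝ) (z : EuclideanSpace ℝ (Fin n × Fin d)) (i : Fin n) :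
    blockNorm n d z i ^ ((1:ℝ) / (2 * (i:ℕ) + 1)) ≤ rho n d u z :=
  (Finset.single_le_sum (f := fun i : Fin n => blockNorm n d z i ^ ((1:ℝ) / (2 * (i:ℕ) + 1)))
    (fun j _ => Real.rpow_nonneg (blockNorm_nonneg z j) _) (Finset.mem_univ i)).trans
    (le_add_of_nonneg_left (Real.rpow_nonneg (abs_nonneg u) _))

lemma abs_le_sq_of_rho_le {u δ : ℝ} {z : EuclideanSpace ℝ (Fin n × Fin d)}
    (h : rho n d u z ≤ δ) : |u| ≤ δ ^ 2 := by
  have h' := (abs_rpow_one_div_two_le_rho u z).trans h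
  rw [← Real.sqrt_eq_rpow] at h'
  exact (Real.sqrt_le_iff.mp h').2

lemma blockNorm_le_of_rho_le {u δ : ℝ} {z : EuclideanSpace ℝ (Fin n × Fin d)}
    (h : rho n d u z ≤ δ) (i : Fin n) : blockNorm n d z i ≤ δ ^ (2 * (i:ℕ) + 1) := by
  have h' := (blockNorm_rpow_le_rho u z i).trans h
  have hδ : 0 ≤ δ := (Real.rpow_nonneg (blockNorm_nonneg z i) _).trans h'
  rw [one_div, Real.rpow_inv_le_iff_of_pos (blockNorm_nonneg z i) hδ (by positivity)] at h'
  exact_mod_cast h'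

def rhoBall (n d : ℕ) (δ : ℝ) : Set (ℝ × EuclideanSpace ℝ (Fin n × Fin d)) :=
  {p | rho n d p.1 p.2 ≤ δ}

lemma isCompact_rhoBall (δ : ℝ) : IsCompact (rhoBall n d δ) := by
  refine Metric.isCompact_of_isClosed_isBounded (isClosed_le continuous_rho continuous_const) ?_
  refine ((Metric.isBounded_Icc (-δ ^ 2) (δ ^ 2)).prod (Metric.isBounded_closedBall (x := 0)
    (r := √(∑ i : Fin n, (δ ^ (2 * (i:ℕ) + 1)) ^ 2)))).subset ?_
  rintro ⟨u, z⟩ (h : rho n d u z ≤ δ)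
  refine ⟨abs_le.mp (abs_le_sq_of_rho_le h), ?_⟩
  rw [Metric.mem_closedBall, dist_zero_right, ← Real.sqrt_sq (norm_nonneg z),
    norm_sq_eq_sum_blockNorm_sq]
  gcongr with i
  · exact blockNorm_nonneg z i
  · exact blockNorm_le_of_rho_le h i

lemma volume_rhoBall_ne_top (δ : ℝ) : volume (rhoBall n d δ) ≠ ⊤ :=
  (isCompact_rhoBall δ).measure_ne_top

lemma volume_rhoBall_pos {δ : ℝ} (hδ : 0 < δ) : 0 < volume (rhoBall n d δ) := by
  have : (volume : Measure (ℝ × EuclideanSpace ℝ (Fin n × Fin d))).IsOpenPosMeasure := by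
    rw [Measure.volume_eq_prod]; infer_instance
  refine lt_of_lt_of_le ((isOpen_lt continuous_rho continuous_const).measure_pos _ ⟨0, ?_⟩)
    (measure_mono fun p (hp : rho n d p.1 p.2 < δ) => hp.le)
  simpa [rho_zero] using hδ

noncomputable def dilation (n d : ℕ) (δ : ℝ) :
    ℝ × EuclideanSpace ℝ (Fin n × Fin d) →ₗ[ℝ] ℝ × EuclideanSpace ℝ (Fin n × Fin d) :=
  (δ ^ 2 • LinearMap.id).prodMap
    (Matrix.toLpLin 2 2 (Matrix.diagonal fun iq : Fin n × Fin d => δ ^ (2 * (iq.1 : ℕ) + 1)))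

lemma det_dilation (δ : ℝ) : LinearMap.det (dilation n d δ) = δ ^ (2 + n ^ 2 * d) := by
  rw [dilation, LinearMap.det_prodMap, LinearMap.det_smul, LinearMap.det_id,
    LinearMap.det_toLpLin, Matrix.det_diagonal, Finset.prod_pow_eq_pow_sum,
    Fintype.sum_prod_type]
  simp only [Finset.sum_const, Finset.card_univ, Fintype.card_fin, smul_eq_mul,
    Module.finrank_self, pow_one, mul_one, pow_add, mul_comm d]
  rw [← Finset.sum_mul, Fin.sum_univ_two_mul_add_one]

lemma blockNorm_dilation {δ : ℝ} (hδ : 0 ≤ δ) (p : ℝ × EuclideanSpace ℝ (Fin n × Fin d))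
    (i : Fin n) :
    blockNorm n d (dilation n d δ p).2 i = δ ^ (2 * (i : ℕ) + 1) * blockNorm n d p.2 i := by
  simp only [blockNorm, dilation, LinearMap.prodMap_apply, Matrix.toLpLin_apply,
    Matrix.mulVec_diagonal, PiLp.toLp_apply, mul_pow, ← Finset.mul_sum]
  rw [Real.sqrt_mul (sq_nonneg _), Real.sqrt_sq (by positivity)]

lemma rho_dilation {δ : ℝ} (hδ : 0 ≤ δ) (p : ℝ × EuclideanSpace ℝ (Fin n × Fin d)) :
    rho n d (dilation n d δ p).1 (dilation n d δ p).2 = δ * rho n d p.1 p.2 := by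
  have hroot : ∀ m : ℕ, m ≠ 0 → ∀ b : ℝ, 0 ≤ b →
      (δ ^ m * b) ^ ((m : ℝ)⁻¹) = δ * b ^ ((m : ℝ)⁻¹) :=
    fun m hm b hb => by rw [Real.mul_rpow (by positivity) hb, Real.pow_rpow_inv_natCast hδ hm]
  have hu : (dilation n d δ p).1 = δ ^ 2 * p.1 := by simp [dilation]
  simp only [rho, hu, blockNorm_dilation hδ, abs_mul, abs_of_nonneg (sq_nonneg δ), mul_add,
    Finset.mul_sum]
  congr 1
  · rw [one_div]
    exact_mod_cast hroot 2 two_ne_zero |p.1| (abs_nonneg _)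
  · refine Finset.sum_congr rfl fun i _ => ?_
    have := hroot (2 * (i : ℕ) + 1) (by omega) _ (blockNorm_nonneg p.2 i)
    push_cast at this
    rwa [one_div]

lemma volume_rhoBall {δ : ℝ} (hδ : 0 < δ) :
    volume (rhoBall n d δ) = ENNReal.ofReal (δ ^ (2 + n ^ 2 * d)) * volume (rhoBall n d 1) := by
  have hpre : dilation n d δ ⁻¹' rhoBall n d δ = rhoBall n d 1 := by
    ext p
    simp only [rhoBall, Set.mem_preimage, Set.mem_ofPred_eq, rho_dilation hδ.le]
    exact mul_le_iff_le_one_right hδ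
  have hdet : LinearMap.det (dilation n d δ) ≠ 0 := by rw [det_dilation]; positivity
  rw [← hpre, Measure.volume_eq_prod, Measure.addHaar_preimage_linearMap _ hdet, ← mul_assoc,
    ← ENNReal.ofReal_mul (by positivity), det_dilation, abs_of_pos (by positivity),
    mul_inv_cancel₀ (by positivity), ENNReal.ofReal_one, one_mul]

lemma volume_setOf_rho_sub_le {γ : ℝ → EuclideanSpace ℝ (Fin n × Fin d)} (hγ : Measurable γ)
    (s δ : ℝ) :
    volume {p : ℝ × EuclideanSpace ℝ (Fin n × Fin d) | rho n d (p.1 - s) (γ p.1 - p.2) ≤ δ} =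
      volume (rhoBall n d δ) := by
  rw [Measure.volume_eq_prod]
  exact (measurePreserving_sub_prodMk_sub volume hγ s).measure_preimage
    (isCompact_rhoBall δ).isClosed.measurableSet.nullMeasurableSet

end ParabolicBall

theorem stmt_12_general (n d : ℕ) (T : ℝ)
    (F : ℝ → EuclideanSpace ℝ (Fin n × Fin d) → EuclideanSpace ℝ (Fin n × Fin d))
    (θ : ℝ → ℝ → EuclideanSpace ℝ (Fin n × Fin d) → EuclideanSpace ℝ (Fin n × Fin d))
    (hflow : ∀ s x t, HasDerivAt (fun u => θ u s x) (F t (θ t s x)) t) :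
    ∃ C₁ : ℝ, 1 ≤ C₁ ∧ ∀ (s : ℝ) (x : EuclideanSpace ℝ (Fin n × Fin d)) (δ : ℝ),
      0 < δ → |s| + δ ^ 2 ≤ T →
      C₁⁻¹ * δ ^ (2 + n ^ 2 * d) ≤
        (volume {p : ℝ × EuclideanSpace ℝ (Fin n × Fin d) |
          p.1 ∈ Set.Icc (-T) T ∧ rho n d (p.1 - s) (θ p.1 s x - p.2) ≤ δ}).toReal ∧
      (volume {p : ℝ × EuclideanSpace ℝ (Fin n × Fin d) |
          p.1 ∈ Set.Icc (-T) T ∧ rho n d (p.1 - s) (θ p.1 s x - p.2) ≤ δ}).toReal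
        ≤ C₁ * δ ^ (2 + n ^ 2 * d) := by
  set V := (volume (rhoBall n d 1)).toReal
  have hV : 0 < V := ENNReal.toReal_pos (volume_rhoBall_pos one_pos).ne' (volume_rhoBall_ne_top 1)
  have hC : 1 ≤ max V V⁻¹ := by
    rcases le_total 1 V with h | h
    · exact h.trans (le_max_left _ _)
    · exact ((one_le_inv₀ hV).2 h).trans (le_max_right _ _)
  refine ⟨max V V⁻¹, hC, fun s x δ hδ hsT => ?_⟩
  have hθ : Measurable fun t => θ t s x :=
    (continuous_iff_continuousAt.2 fun t => (hflow s x t).continuousAt).measurable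
  have hslab : {p : ℝ × EuclideanSpace ℝ (Fin n × Fin d) |
      p.1 ∈ Set.Icc (-T) T ∧ rho n d (p.1 - s) (θ p.1 s x - p.2) ≤ δ} =
      {p | rho n d (p.1 - s) (θ p.1 s x - p.2) ≤ δ} := by
    refine Set.ext fun p => and_iff_right_of_imp fun h => ?_
    have := abs_le.mp (abs_le_sq_of_rho_le h)
    constructor <;> linarith [neg_abs_le s, le_abs_self s]
  have hvol : (volume {p : ℝ × EuclideanSpace ℝ (Fin n × Fin d) |
      p.1 ∈ Set.Icc (-T) T ∧ rho n d (p.1 - s) (θ p.1 s x - p.2) ≤ δ}).toReal =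
      δ ^ (2 + n ^ 2 * d) * V := by
    rw [hslab, volume_setOf_rho_sub_le hθ, volume_rhoBall hδ, ENNReal.toReal_mul,
      ENNReal.toReal_ofReal (by positivity)]
  rw [hvol, mul_comm _ V]
  exact ⟨by gcongr; exact inv_le_of_inv_le₀ hV (le_max_right _ _), by gcongr; exact le_max_left _ _⟩

/-- Volume of the quasi-metric balls B((s,x),δ) = {(t,y) ∈ S : ρ(t−s, θ_{t,s}(x)−y) ≤ δ}
is comparable to δ^{2+n²d}, uniformly in the center (s,x) and (small) radius δ. -/
theorem stmt_12 (n d : ℕ) (hn : 1 ≤ n) (hd : 1 ≤ d) (T : ℝ) (hT : 0 < T) (κ : NNReal)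
    (F : ℝ → EuclideanSpace ℝ (Fin n × Fin d) → EuclideanSpace ℝ (Fin n × Fin d))
    (hLip : ∀ t, LipschitzWith κ (F t))
    (θ : ℝ → ℝ → EuclideanSpace ℝ (Fin n × Fin d) → EuclideanSpace ℝ (Fin n × Fin d))
    (hflow0 : ∀ s x, θ s s x = x)
    (hflow : ∀ s x t, HasDerivAt (fun u => θ u s x) (F t (θ t s x)) t) :
    ∃ C₁ : ℝ, 1 ≤ C₁ ∧ ∀ (s : ℝ) (x : EuclideanSpace ℝ (Fin n × Fin d)) (δ : ℝ),
      0 < δ → |s| + δ ^ 2 ≤ T →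
      C₁⁻¹ * δ ^ (2 + n ^ 2 * d) ≤
        (volume {p : ℝ × EuclideanSpace ℝ (Fin n × Fin d) |
          p.1 ∈ Set.Icc (-T) T ∧ rho n d (p.1 - s) (θ p.1 s x - p.2) ≤ δ}).toReal ∧
      (volume {p : ℝ × EuclideanSpace ℝ (Fin n × Fin d) |
          p.1 ∈ Set.Icc (-T) T ∧ rho n d (p.1 - s) (θ p.1 s x - p.2) ≤ δ}).toReal
        ≤ C₁ * δ ^ (2 + n ^ 2 * d) :=
  stmt_12_general n d T F θ hflow
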